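/- arXiv:1908.07437 — 5 statements merged into one kernel-verified Lean document; each statement's English description precedes it below -/
import Mathlib

section
/- Consider a square matrix $M$ of size $n_L$ with unit diagonal whose off-diagonal entry $m_{i,j}$ is nonzero only if edge $j$ follows edge $i$ in a directed graph, and suppose each such nonzero entry equals $(-1)^{1+w_{ij}+t_i} a_i$ where for every simple directed cycle $C=(e_{i_1},\dots,e_{i_{u+1}})$ of the graph the sum of the winding contributions $\sum_t w_{i_t i_{t+1}}$ is odd and the sum of the intersection contributions $\sum_t t_{i_t}$ is even. Then $\det M = \sum_{C \in \mathcal{C}} w(C)$, where the sum runs over all conservative flows $C$ (disjoint unions of simple directed cycles, including the empty flow with weight 1) and $w(C)$ is the product of the weights $a_i$ over edges of $C$. -/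
/-!
Expand `det M` over permutations. With unit diagonal, a permutation contributes only if each of
its non-fixed points is followed by its image, i.e. it is a conservative flow, and its term is
`sign σ` times the product of the edge signs `(-1)^(1 + w + t)` times the weights `a i`. Both
`sign` and the product of edge signs are multiplicative over disjoint cycles, and on a cycle of
length `k` the parity hypotheses make the edge signs multiply to `-(-1)^k`, the sign of the
cycle. So the two agree on every flow and cancel, leaving the product of the weights.
-/

open scoped Classical

open Finset Equiv

namespace Equiv.Perm

variable {n : Type*} [Fintype n] [DecidableEq n]

/-- A conservative flow of the graph `r`, encoded as the permutation sending each vertex of the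
flow to its successor on its cycle and fixing all other vertices. -/
def IsConservativeFlow (r : n → n → Prop) (σ : Perm n) : Prop := ∀ i, σ i ≠ i → r i (σ i)

theorem Disjoint.mul_apply_of_mem_support_left {σ τ : Perm n} (h : σ.Disjoint τ)
    {i : n} (hi : i ∈ σ.support) : (σ * τ) i = σ i := by
  rw [mul_apply, (h i).resolve_left (mem_support.1 hi)]

theorem Disjoint.mul_apply_of_mem_support_right {σ τ : Perm n} (h : σ.Disjoint τ)
    {i : n} (hi : i ∈ τ.support) : (σ * τ) i = τ i := by
  rw [h.commute.eq]
  exact h.symm.mul_apply_of_mem_support_left hi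

theorem Disjoint.prod_support_mul {M : Type*} [CommMonoid M] {σ τ : Perm n}
    (h : σ.Disjoint τ) (f : n → n → M) :
    ∏ i ∈ (σ * τ).support, f i ((σ * τ) i) =
      (∏ i ∈ σ.support, f i (σ i)) * ∏ i ∈ τ.support, f i (τ i) := by
  rw [h.support_mul, prod_union h.disjoint_support]
  congr 1 <;> refine prod_congr rfl fun i hi => ?_
  · rw [h.mul_apply_of_mem_support_left hi]
  · rw [h.mul_apply_of_mem_support_right hi]

namespace IsConservativeFlow

variable {r : n → n → Prop}

theorem of_mul_left {σ τ : Perm n} (h : σ.Disjoint τ) (hστ : IsConservativeFlow r (σ * τ)) :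
    IsConservativeFlow r σ := fun i hi => by
  have happ := h.mul_apply_of_mem_support_left (mem_support.2 hi)
  simpa only [happ] using hστ i (by rwa [happ])

theorem of_mul_right {σ τ : Perm n} (h : σ.Disjoint τ) (hστ : IsConservativeFlow r (σ * τ)) :
    IsConservativeFlow r τ :=
  of_mul_left h.symm (h.commute.eq ▸ hστ)

theorem eq_of_isCycle {G : Type*} [Group G] {f g : Perm n → G}
    (hf : ∀ σ τ, σ.Disjoint τ → f (σ * τ) = f σ * f τ)
    (hg : ∀ σ τ, σ.Disjoint τ → g (σ * τ) = g σ * g τ)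
    (hcycle : ∀ τ, τ.IsCycle → IsConservativeFlow r τ → f τ = g τ) {σ : Perm n}
    (hσ : IsConservativeFlow r σ) : f σ = g σ := by
  induction σ using cycle_induction_on with
  | base_one =>
    have hf1 := hf 1 1 (disjoint_one_left 1)
    have hg1 := hg 1 1 (disjoint_one_left 1)
    rw [mul_one, left_eq_mul] at hf1 hg1
    rw [hf1, hg1]
  | base_cycles τ hτ => exact hcycle τ hτ hσ
  | induction_disjoint σ τ h _ ihσ ihτ =>
    rw [hf σ τ h, hg σ τ h, ihσ (hσ.of_mul_left h), ihτ (hσ.of_mul_right h)]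

theorem sign_eq_prod {ε : n → n → ℤˣ}
    (hcycle : ∀ τ, τ.IsCycle → IsConservativeFlow r τ → sign τ = ∏ i ∈ τ.support, ε i (τ i))
    {σ : Perm n} (hσ : IsConservativeFlow r σ) : sign σ = ∏ i ∈ σ.support, ε i (σ i) :=
  hσ.eq_of_isCycle (fun σ τ _ => map_mul sign σ τ) (fun _ _ h => h.prod_support_mul ε) hcycle

end IsConservativeFlow

theorem IsCycle.sign_eq_prod_neg_one_pow {τ : Perm n} (hτ : τ.IsCycle) (c : n → ℕ)
    (hc : Odd (∑ i ∈ τ.support, c i)) :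
    τ.sign = ∏ i ∈ τ.support, (-1 : ℤˣ) ^ (1 + c i) := by
  rw [hτ.sign, prod_pow_eq_pow_sum, sum_add_distrib, pow_add, hc.neg_one_pow, card_eq_sum_ones]
  simp

theorem prod_apply_eq_prod_support {R : Type*} [CommMonoid R] {M : n → n → R}
    (hdiag : ∀ i, M i i = 1) (σ : Perm n) :
    ∏ i, M i (σ i) = ∏ i ∈ σ.support, M i (σ i) :=
  (prod_subset (subset_univ _) fun i _ hi => by rw [notMem_support.1 hi, hdiag]).symm

end Equiv.Perm

open Equiv.Perm

theorem Matrix.det_eq_sum_isConservativeFlow {n R : Type*} [Fintype n] [DecidableEq n]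
    [CommRing R] (M : Matrix n n R) (r : n → n → Prop) (hdiag : ∀ i, M i i = 1)
    (hzero : ∀ i j, i ≠ j → ¬ r i j → M i j = 0) :
    M.det = ∑ σ ∈ univ.filter (IsConservativeFlow r), sign σ • ∏ i ∈ σ.support, M i (σ i) := by
  rw [← det_transpose, det_apply]
  simp only [transpose_apply, prod_apply_eq_prod_support hdiag]
  refine (sum_filter_of_ne fun σ _ hσ i hi => ?_).symm
  by_contra hr
  exact hσ (by rw [prod_eq_zero (mem_support.2 hi) (hzero i (σ i) hi.symm hr), smul_zero])

/-- Let `M` be a square matrix with unit diagonal, whose off-diagonal entry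
`M i j` is nonzero only if edge `j` follows edge `i` in a directed graph, in which case
`M i j = (-1)^(1 + w i j + t i) * a i`.  Assume that along every simple directed cycle
(i.e. every cyclic permutation all of whose non-fixed points follow their images) the total
winding `∑ w` is odd and the total intersection number `∑ t` is even.  Then `det M` equals
the sum, over all conservative flows (permutations each of whose non-fixed points follows its
image, i.e. disjoint unions of simple directed cycles, including the identity = empty flow with
weight `1`), of the product of the weights `a i` over the edges of the flow. -/
theorem det_eq_sum_conservative_flows (nL : ℕ) (M : Matrix (Fin nL) (Fin nL) ℝ)
    (follows : Fin nL → Fin nL → Prop)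
    (a : Fin nL → ℝ) (w : Fin nL → Fin nL → ℕ) (t : Fin nL → ℕ)
    (hdiag : ∀ i, M i i = 1)
    (hentry : ∀ i j, i ≠ j → follows i j → M i j = (-1 : ℝ) ^ (1 + w i j + t i) * a i)
    (hzero : ∀ i j, i ≠ j → ¬ follows i j → M i j = 0)
    (hcycle : ∀ τ : Equiv.Perm (Fin nL), τ.IsCycle →
      (∀ i, τ i ≠ i → follows i (τ i)) →
      (∑ i ∈ τ.support, w i (τ i)) % 2 = 1 ∧ (∑ i ∈ τ.support, t i) % 2 = 0) :
    M.det = ∑ σ ∈ Finset.univ.filter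
        (fun σ : Equiv.Perm (Fin nL) => ∀ i, σ i ≠ i → follows i (σ i)),
      ∏ i ∈ σ.support, a i := by
  set ε : Fin nL → Fin nL → ℤˣ := fun i j => (-1) ^ (1 + w i j + t i)
  have hsign (σ : Perm (Fin nL)) (hσ : IsConservativeFlow follows σ) :
      sign σ = ∏ i ∈ σ.support, ε i (σ i) :=
    hσ.sign_eq_prod fun τ hτ hflow => by
      obtain ⟨hw, ht⟩ := hcycle τ hτ hflow
      have hodd : Odd (∑ i ∈ τ.support, (w i (τ i) + t i)) := by
        rw [Nat.odd_iff, sum_add_distrib]; omega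
      simpa only [ε, add_assoc] using hτ.sign_eq_prod_neg_one_pow _ hodd
  rw [M.det_eq_sum_isConservativeFlow follows hdiag hzero]
  refine sum_congr (filter_congr fun _ _ => Iff.rfl) fun σ hσ => ?_
  have hflow : IsConservativeFlow follows σ := (mem_filter.1 hσ).2
  have hM : ∀ i ∈ σ.support, M i (σ i) = ε i (σ i) • a i := fun i hi => by
    rw [hentry i (σ i) (mem_support.1 hi).symm (hflow i (mem_support.1 hi)), Units.smul_def]
    simp [ε]
  rw [prod_congr rfl hM, prod_smul, smul_smul, ← hsign σ hflow, Int.units_mul_self, one_smul]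
end

section
/- Let $(\mathcal{N},\mathcal{O},\mathfrak{l})$ be a PBDTP network with gauge ray direction $\mathfrak{l}$. For any assignment of $n-k$ linearly independent vectors to the boundary sinks, the linear system of geometric relations at all internal vertices (edge vector at a bivalent vertex equal to a signed weighted multiple of the outgoing edge vector; at a trivalent black vertex each incoming edge vector a signed weighted multiple of the outgoing one; at a trivalent white vertex the incoming edge vector a signed weighted sum of the two outgoing ones) is consistent and has a unique solution; moreover with a suitable ordering of variables and equations, the determinant of its coefficient matrix equals $\sum_{C \in \mathcal{C}(\mathcal{G})} w(C)$, the sum of the weights of all conservative flows, which is strictly positive for positive weights. -/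
open scoped Classical

section Aux

open Equiv Equiv.Perm Finset

/-- Key sign cancellation lemma. -/
lemma sign_cancel_aux (nL : ℕ) (follows : Fin nL → Fin nL → Prop)
    (w : Fin nL → Fin nL → ℕ) (t : Fin nL → ℕ)
    (hcycle : ∀ τ : Equiv.Perm (Fin nL), τ.IsCycle →
      (∀ i, τ i ≠ i → follows i (τ i)) →
      (∑ i ∈ τ.support, w i (τ i)) % 2 = 1 ∧ (∑ i ∈ τ.support, t i) % 2 = 0)
    (σ : Equiv.Perm (Fin nL)) (hσ : ∀ i, σ i ≠ i → follows i (σ i)) :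
    ((Equiv.Perm.sign σ : ℤ) : ℝ) *
      ∏ i ∈ σ.support, (-1 : ℝ) ^ (1 + w i (σ i) + t i) = 1 := by
  classical
  set S := σ.cycleFactorsFinset with hS
  have hpd : (S : Set (Perm (Fin nL))).Pairwise Disjoint :=
    cycleFactorsFinset_pairwise_disjoint σ
  have hprod : S.noncommProd id (hpd.mono' fun _ _ => Disjoint.commute) = σ :=
    cycleFactorsFinset_noncommProd σ
  -- support equality
  have hsupp : σ.support = S.biUnion fun c => c.support := by
    conv_lhs => rw [← hprod]
    exact support_noncommProd hpd
  -- sign equality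
  have hsign : Equiv.Perm.sign σ = ∏ c ∈ S, Equiv.Perm.sign c := by
    conv_lhs => rw [← hprod]
    rw [Finset.map_noncommProd _ _ _ Equiv.Perm.sign]
    exact Finset.noncommProd_eq_prod _ _
  -- per-cycle facts
  have hcyc : ∀ c ∈ S, c.IsCycle ∧ ∀ i ∈ c.support, c i = σ i := fun c hc =>
    mem_cycleFactorsFinset_iff.mp hc
  have hdisj : (↑S : Set (Perm (Fin nL))).PairwiseDisjoint fun c => c.support := by
    intro x hx y hy hxy
    exact (hpd hx hy hxy).disjoint_support
  have key : ∀ c ∈ S,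
      ((Equiv.Perm.sign c : ℤ) : ℝ) *
        ∏ i ∈ c.support, (-1 : ℝ) ^ (1 + w i (σ i) + t i) = 1 := by
    intro c hc
    obtain ⟨hic, hagree⟩ := hcyc c hc
    have hfol : ∀ i, c i ≠ i → follows i (c i) := by
      intro i hi
      have hmem : i ∈ c.support := mem_support.mpr hi
      have h1 : c i = σ i := hagree i hmem
      have h2 : σ i ≠ i := h1 ▸ hi
      rw [h1]; exact hσ i h2
    obtain ⟨hw, ht⟩ := hcycle c hic hfol
    have hrw : ∏ i ∈ c.support, (-1 : ℝ) ^ (1 + w i (σ i) + t i)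
        = ∏ i ∈ c.support, (-1 : ℝ) ^ (1 + w i (c i) + t i) :=
      Finset.prod_congr rfl fun i hi => by rw [hagree i hi]
    rw [hrw, Finset.prod_pow_eq_pow_sum]
    have hsum : ∑ i ∈ c.support, (1 + w i (c i) + t i)
        = c.support.card + ((∑ i ∈ c.support, w i (c i)) + ∑ i ∈ c.support, t i) := by
      rw [Finset.sum_add_distrib, Finset.sum_add_distrib, Finset.sum_const, smul_eq_mul,
        mul_one, add_assoc]
    have hsgn : (Equiv.Perm.sign c : ℤ) = -(-1 : ℤ) ^ c.support.card := by
      rw [hic.sign]; push_cast; ring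
    have heven : Even ((∑ i ∈ c.support, w i (c i)) + ∑ i ∈ c.support, t i + 1) := by
      have h1 : Odd (∑ i ∈ c.support, w i (c i)) := Nat.odd_iff.mpr hw
      have h2 : Even (∑ i ∈ c.support, t i) := Nat.even_iff.mpr ht
      have : Odd ((∑ i ∈ c.support, w i (c i)) + ∑ i ∈ c.support, t i) := h1.add_even h2
      exact this.add_one
    have hneg : (-1 : ℝ) ^ ((∑ i ∈ c.support, w i (c i)) + ∑ i ∈ c.support, t i + 1) = 1 :=
      heven.neg_one_pow
    have hX : (-1 : ℝ) ^ ((∑ i ∈ c.support, w i (c i)) + ∑ i ∈ c.support, t i) = -1 := by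
      rw [pow_succ] at hneg; linarith
    have h2 : (-1 : ℝ) ^ c.support.card * (-1 : ℝ) ^ c.support.card = 1 := by
      rw [← pow_add]; exact Even.neg_one_pow ⟨c.support.card, rfl⟩
    rw [hsum, hsgn]
    push_cast
    rw [pow_add, hX]
    linear_combination h2
  -- combine
  rw [hsupp, Finset.prod_biUnion hdisj, hsign]
  push_cast
  rw [← Finset.prod_mul_distrib]
  exact Finset.prod_eq_one key

end Aux

/-- (Theorem `theo:consist`.)  The linear system of geometric relations on a
PBDTP network `(𝒩, 𝒪, 𝔩)` is encoded by a square matrix `M` of size `nL = n_I + k` with unit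
diagonal: the row of each edge expresses its vector as a signed weighted combination of the
edge vectors at the following edges (one term at bivalent and black vertices, two at white
vertices), the sign being `(-1)^(int + wind) = -(-1)^(1 + wind + int)`; along each simple
directed cycle the total winding is odd and the total intersection number is even, and the
weights `a i` are positive.  Then for any inhomogeneous right-hand side (in particular, for the
boundary data obtained from any `n-k` linearly independent vectors at the boundary sinks) the
system is consistent with a unique solution, and `det M` equals the sum of the weights of all
conservative flows, which is strictly positive. -/
theorem geometric_system_unique_solution (nL nV : ℕ) (M : Matrix (Fin nL) (Fin nL) ℝ)
    (follows : Fin nL → Fin nL → Prop)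
    (a : Fin nL → ℝ) (w : Fin nL → Fin nL → ℕ) (t : Fin nL → ℕ)
    (hpos : ∀ i, 0 < a i)
    (hdiag : ∀ i, M i i = 1)
    (hentry : ∀ i j, i ≠ j → follows i j → M i j = (-1 : ℝ) ^ (1 + w i j + t i) * a i)
    (hzero : ∀ i j, i ≠ j → ¬ follows i j → M i j = 0)
    (hcycle : ∀ τ : Equiv.Perm (Fin nL), τ.IsCycle →
      (∀ i, τ i ≠ i → follows i (τ i)) →
      (∑ i ∈ τ.support, w i (τ i)) % 2 = 1 ∧ (∑ i ∈ τ.support, t i) % 2 = 0) :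
    M.det = (∑ σ ∈ Finset.univ.filter
        (fun σ : Equiv.Perm (Fin nL) => ∀ i, σ i ≠ i → follows i (σ i)),
      ∏ i ∈ σ.support, a i) ∧
    0 < M.det ∧
    ∀ b : Fin nL → (Fin nV → ℝ),
      ∃! x : Fin nL → (Fin nV → ℝ), ∀ i, ∑ j, M i j • x j = b i := by
    classical
  set P : Equiv.Perm (Fin nL) → Prop := fun σ => ∀ i, σ i ≠ i → follows i (σ i) with hP
  have hdet : M.det = ∑ σ ∈ Finset.univ.filter P, ∏ i ∈ σ.support, a i := by
    rw [← Matrix.det_transpose M, Matrix.det_apply']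
    rw [← Finset.sum_filter_add_sum_filter_not Finset.univ P]
    have hbad : ∑ σ ∈ Finset.univ.filter (fun σ => ¬ P σ),
        ((Equiv.Perm.sign σ : ℤ) : ℝ) * ∏ i, M.transpose (σ i) i = 0 := by
      apply Finset.sum_eq_zero
      intro σ hσ
      have hσ' : ¬ P σ := (Finset.mem_filter.mp hσ).2
      simp only [hP] at hσ'
      push_neg at hσ'
      obtain ⟨i₀, hne, hnf⟩ := hσ'
      have : M.transpose (σ i₀) i₀ = 0 := by
        rw [Matrix.transpose_apply]
        exact hzero i₀ (σ i₀) (Ne.symm hne) hnf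
      have hz : (∏ i, M.transpose (σ i) i) = 0 :=
        Finset.prod_eq_zero (Finset.mem_univ i₀) this
      rw [hz, mul_zero]
    rw [hbad, add_zero]
    apply Finset.sum_congr rfl
    intro σ hσ
    have hσ' : P σ := (Finset.mem_filter.mp hσ).2
    have hprod : ∏ i, M.transpose (σ i) i = ∏ i ∈ σ.support, M i (σ i) := by
      simp only [Matrix.transpose_apply]
      symm
      apply Finset.prod_subset (Finset.subset_univ _)
      intro i _ hi
      rw [Equiv.Perm.notMem_support.mp hi]
      exact hdiag i
    have hprod2 : ∏ i ∈ σ.support, M i (σ i)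
        = (∏ i ∈ σ.support, (-1 : ℝ) ^ (1 + w i (σ i) + t i)) * ∏ i ∈ σ.support, a i := by
      rw [← Finset.prod_mul_distrib]
      apply Finset.prod_congr rfl
      intro i hi
      exact hentry i (σ i) (Ne.symm (Equiv.Perm.mem_support.mp hi)) (hσ' i (Equiv.Perm.mem_support.mp hi))
    rw [hprod, hprod2, ← mul_assoc,
      sign_cancel_aux nL follows w t hcycle σ hσ', one_mul]
  have hpos' : 0 < M.det := by
    rw [hdet]
    apply Finset.sum_pos'
    · intro σ _
      exact Finset.prod_nonneg fun i _ => (hpos i).le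
    · refine ⟨1, ?_, ?_⟩
      · simp only [Finset.mem_filter, Finset.mem_univ, true_and, hP]
        intro i hi
        exact absurd rfl hi
      · simp
  refine ⟨hdet, hpos', ?_⟩
  have hunit : IsUnit M.det := isUnit_iff_ne_zero.mpr (ne_of_gt hpos')
  intro b
  have hequiv : ∀ x : Fin nL → Fin nV → ℝ,
      (∀ i, ∑ j, M i j • x j = b i) ↔ M * Matrix.of x = Matrix.of b := by
    intro x
    constructor
    · intro h
      ext i v
      rw [Matrix.mul_apply]
      have := congrFun (h i) v
      simpa [Finset.sum_apply] using this
    · intro h i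
      funext v
      have h2 : (M * Matrix.of x) i v = Matrix.of b i v := by rw [h]
      simpa [Matrix.mul_apply, Finset.sum_apply] using h2
  refine ⟨fun j => (M⁻¹ * Matrix.of b) j, ?_, ?_⟩
  · apply (hequiv _).mpr
    have : Matrix.of (fun j => (M⁻¹ * Matrix.of b) j) = M⁻¹ * Matrix.of b := rfl
    rw [this]
    exact Matrix.mul_nonsing_inv_cancel_left M _ hunit
  · intro y hy
    replace hy := (hequiv y).mp hy
    funext j v
    have h3 : Matrix.of y = M⁻¹ * Matrix.of b := by
      rw [← hy, Matrix.nonsing_inv_mul_cancel_left M _ hunit]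
    have h4 : Matrix.of y j v = (M⁻¹ * Matrix.of b) j v := by rw [h3]
    exact h4
end

section
/- Let $e_1,e_2,f$ be three pairwise non-parallel plane vectors and $\mathfrak{l}$ a gauge direction not parallel to any of them. Define $W_b(e_1,e_2,f)=\mathrm{wind}(f,e_2)-\mathrm{wind}(f,-e_1)-\mathrm{wind}(e_1,e_2)-\epsilon_2(e_1)$. Then $W_b(e_1,e_2,f) = \big(s(f,e_2)[\epsilon_2(e_2)-\epsilon_2(f)]^2 + s(f,e_1)[1-\epsilon_2(e_1)-\epsilon_2(f)]^2 + s(e_2,e_1)[\epsilon_2(e_2)-\epsilon_2(e_1)]^2 - 1\big)/2$; in particular $W_b(e_1,e_2,f)$ is independent of the choice of gauge direction $\mathfrak{l}$. -/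
open scoped Classical

/-- The determinant of the `2×2` matrix with columns `x, y`; nonzero iff `x,y` not parallel. -/
noncomputable def det2 (x y : ℝ × ℝ) : ℝ := x.1 * y.2 - x.2 * y.1

/-- The orientation sign `s(x,y) ∈ {±1}` of an ordered pair of (non-parallel) plane vectors. -/
noncomputable def sgn (x y : ℝ × ℝ) : ℝ := Real.sign (det2 x y)

/-- The index `ε₂(x) = (1 - s(x,𝔩))/2` of a vector `x` with respect to the gauge direction `l`. -/
noncomputable def eps2 (l x : ℝ × ℝ) : ℝ := (1 - sgn x l) / 2

/-- The local winding number of the ordered pair `(a,b)` with respect to the gauge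
direction `l`. -/
noncomputable def wind (l a b : ℝ × ℝ) : ℝ :=
  if sgn a b = 1 ∧ sgn a l = 1 ∧ sgn l b = 1 then 1
  else if sgn a b = -1 ∧ sgn a l = -1 ∧ sgn l b = -1 then -1
  else 0

/-- The index `W_b(e₁,e₂,f) = wind(f,e₂) - wind(f,-e₁) - wind(e₁,e₂) - ε₂(e₁)` (with respect
to the gauge direction `l`). -/
noncomputable def Wb (l e1 e2 f : ℝ × ℝ) : ℝ :=
  wind l f e2 - wind l f (-e1) - wind l e1 e2 - eps2 l e1

/-!
Writing `s` for the orientation signs among `e₁, e₂, f` and `σ(x) = s(x, 𝔩)`, every quantity in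
`W_b` is a polynomial in these `±1`-valued signs: `wind(a, b) = (s(a,b) + σ(a) - σ(b) - s(a,b)σ(a)σ(b))/4`
and `ε₂(x) = (1 - σ(x))/2`. The formula is then a polynomial identity modulo `σ² = 1`. For gauge
independence, the Plücker relation among the six determinants of `e₁, e₂, f, 𝔩` is a vanishing sum
of three nonzero terms, so their signs `u, v, w` are not all equal, i.e. `u + v + w + uvw = 0`; this
relation eliminates `σ` from the polynomial.
-/

theorem Real.sign_mul (a b : ℝ) : Real.sign (a * b) = Real.sign a * Real.sign b := by
  rcases lt_trichotomy a 0 with ha | rfl | ha <;> rcases lt_trichotomy b 0 with hb | rfl | hb <;>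
    simp [Real.sign_of_pos, Real.sign_of_neg, mul_pos_of_neg_of_neg, mul_neg_of_neg_of_pos,
      mul_neg_of_pos_of_neg, *]

theorem Real.sign_add_sign_add_sign_add_mul_eq_zero {p q r : ℝ} (hp : p ≠ 0) (hq : q ≠ 0)
    (hr : r ≠ 0) (h : p + q + r = 0) :
    Real.sign p + Real.sign q + Real.sign r + Real.sign p * Real.sign q * Real.sign r = 0 := by
  rcases hp.lt_or_gt with hp | hp <;> rcases hq.lt_or_gt with hq | hq <;>
    rcases hr.lt_or_gt with hr | hr <;>
    first
    | linarith
    | simp only [Real.sign_of_pos, Real.sign_of_neg, *]; norm_num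

theorem det2_swap (x y : ℝ × ℝ) : det2 x y = -det2 y x := by
  simp only [det2]; ring

theorem det2_neg_right (x y : ℝ × ℝ) : det2 x (-y) = -det2 x y := by
  simp only [det2, Prod.fst_neg, Prod.snd_neg]; ring

theorem det2_neg_left (x y : ℝ × ℝ) : det2 (-x) y = -det2 x y := by
  simp only [det2, Prod.fst_neg, Prod.snd_neg]; ring

theorem det2_plucker (a b c d : ℝ × ℝ) :
    det2 a b * det2 c d - det2 a c * det2 b d + det2 a d * det2 b c = 0 := by
  simp only [det2]; ring

theorem sgn_swap (x y : ℝ × ℝ) : sgn x y = -sgn y x := by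
  rw [sgn, sgn, det2_swap, Real.sign_neg]

theorem sgn_neg_right (x y : ℝ × ℝ) : sgn x (-y) = -sgn x y := by
  rw [sgn, sgn, det2_neg_right, Real.sign_neg]

theorem sgn_neg_left (x y : ℝ × ℝ) : sgn (-x) y = -sgn x y := by
  rw [sgn, sgn, det2_neg_left, Real.sign_neg]

theorem sgn_eq_neg_one_or_one {x y : ℝ × ℝ} (h : det2 x y ≠ 0) : sgn x y = -1 ∨ sgn x y = 1 :=
  Real.sign_apply_eq_of_ne_zero _ h

theorem sgn_sq {x y : ℝ × ℝ} (h : det2 x y ≠ 0) : sgn x y ^ 2 = 1 := by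
  rcases sgn_eq_neg_one_or_one h with h | h <;> rw [h] <;> norm_num

theorem wind_eq {l a b : ℝ × ℝ} (hab : det2 a b ≠ 0) (hal : det2 a l ≠ 0) (hbl : det2 b l ≠ 0) :
    wind l a b = (sgn a b + sgn a l - sgn b l - sgn a b * sgn a l * sgn b l) / 4 := by
  rw [wind, sgn_swap l b]
  rcases sgn_eq_neg_one_or_one hab with h₁ | h₁ <;> rcases sgn_eq_neg_one_or_one hal with h₂ | h₂ <;>
    rcases sgn_eq_neg_one_or_one hbl with h₃ | h₃ <;> simp only [h₁, h₂, h₃] <;> norm_num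

theorem eps2_sub_eps2_sq {l x y : ℝ × ℝ} (hx : det2 x l ≠ 0) (hy : det2 y l ≠ 0) :
    (eps2 l x - eps2 l y) ^ 2 = (1 - sgn x l * sgn y l) / 2 := by
  simp only [eps2]
  linear_combination (sgn_sq hx + sgn_sq hy) / 4

theorem one_sub_eps2_sub_eps2_sq {l x y : ℝ × ℝ} (hx : det2 x l ≠ 0) (hy : det2 y l ≠ 0) :
    (1 - eps2 l x - eps2 l y) ^ 2 = (1 + sgn x l * sgn y l) / 2 := by
  simp only [eps2]
  linear_combination (sgn_sq hx + sgn_sq hy) / 4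

section

variable {e1 e2 f l : ℝ × ℝ} (h12 : det2 e1 e2 ≠ 0) (h1f : det2 e1 f ≠ 0) (h2f : det2 e2 f ≠ 0)
  (h1l : det2 e1 l ≠ 0) (h2l : det2 e2 l ≠ 0) (hfl : det2 f l ≠ 0)
include h12 h1f h2f h1l h2l hfl

theorem sgn_plucker :
    sgn e1 e2 * sgn f l + -(sgn e1 f * sgn e2 l) + sgn e1 l * sgn e2 f
      + sgn e1 e2 * sgn f l * -(sgn e1 f * sgn e2 l) * (sgn e1 l * sgn e2 f) = 0 := by
  simpa only [sgn, Real.sign_neg, Real.sign_mul] using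
    Real.sign_add_sign_add_sign_add_mul_eq_zero (mul_ne_zero h12 hfl)
      (neg_ne_zero.mpr (mul_ne_zero h1f h2l)) (mul_ne_zero h1l h2f)
      (by linear_combination det2_plucker e1 e2 f l)

theorem Wb_eq_sign_polynomial :
    Wb l e1 e2 f =
      (-sgn e1 e2 - sgn e1 f - sgn e2 f + sgn e1 e2 * sgn e1 l * sgn e2 l
        - sgn e1 f * sgn e1 l * sgn f l + sgn e2 f * sgn e2 l * sgn f l) / 4 - 1 / 2 := by
  have hf2 : det2 f e2 ≠ 0 := by rwa [det2_swap, neg_ne_zero]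
  have hf1 : det2 f (-e1) ≠ 0 := by rwa [det2_neg_right, det2_swap, neg_neg]
  have h1l' : det2 (-e1) l ≠ 0 := by rwa [det2_neg_left, neg_ne_zero]
  rw [Wb, wind_eq hf2 hfl h2l, wind_eq hf1 hfl h1l', wind_eq h12 h1l h2l, eps2, sgn_swap f e2,
    sgn_neg_right, sgn_swap f e1, sgn_neg_left]
  ring

theorem Wb_eq_eps2_formula :
    Wb l e1 e2 f =
      (sgn f e2 * (eps2 l e2 - eps2 l f) ^ 2 +
       sgn f e1 * (1 - eps2 l e1 - eps2 l f) ^ 2 +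
       sgn e2 e1 * (eps2 l e2 - eps2 l e1) ^ 2 - 1) / 2 := by
  rw [Wb_eq_sign_polynomial h12 h1f h2f h1l h2l hfl, eps2_sub_eps2_sq h2l hfl,
    one_sub_eps2_sub_eps2_sq h1l hfl, eps2_sub_eps2_sq h2l h1l, sgn_swap f e2, sgn_swap f e1,
    sgn_swap e2 e1]
  ring

theorem Wb_eq_orientation_formula :
    Wb l e1 e2 f =
      (sgn f e2 + sgn f e1 + sgn e2 e1 - sgn f e2 * sgn f e1 * sgn e2 e1 - 2) / 4 := by
  have key := sgn_plucker h12 h1f h2f h1l h2l hfl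
  rw [Wb_eq_sign_polynomial h12 h1f h2f h1l h2l hfl, sgn_swap f e2, sgn_swap f e1, sgn_swap e2 e1]
  set a := sgn e1 e2
  set b := sgn e1 f
  set c := sgn e2 f
  set x := sgn e1 l
  set y := sgn e2 l
  set z := sgn f l
  -- `key` times `xyz`, reduced by `x² = y² = z² = 1`
  linear_combination (x * y * z * key + (a * b * c - c * y * z) * sgn_sq h1l
    + (b * x * z + a * b * c * x ^ 2) * sgn_sq h2l
    + (a * b * c * x ^ 2 * y ^ 2 - a * x * y) * sgn_sq hfl) / 4

end

/-- (Lemma `lem:indip`, eq. (wind_bw_rel).)  For pairwise non-parallel plane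
vectors `e₁, e₂, f` and a gauge direction `𝔩` not parallel to any of them,
`W_b(e₁,e₂,f) = (s(f,e₂)[ε₂(e₂)-ε₂(f)]² + s(f,e₁)[1-ε₂(e₁)-ε₂(f)]² +
 s(e₂,e₁)[ε₂(e₂)-ε₂(e₁)]² - 1)/2`, and in particular `W_b(e₁,e₂,f)` is independent of the
choice of the admissible gauge direction. -/
theorem Wb_formula_and_gauge_independence (e1 e2 f l : ℝ × ℝ)
    (h12 : det2 e1 e2 ≠ 0) (h1f : det2 e1 f ≠ 0) (h2f : det2 e2 f ≠ 0)
    (h1l : det2 e1 l ≠ 0) (h2l : det2 e2 l ≠ 0) (hfl : det2 f l ≠ 0) :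
    Wb l e1 e2 f =
      (sgn f e2 * (eps2 l e2 - eps2 l f) ^ 2 +
       sgn f e1 * (1 - eps2 l e1 - eps2 l f) ^ 2 +
       sgn e2 e1 * (eps2 l e2 - eps2 l e1) ^ 2 - 1) / 2 ∧
    ∀ l' : ℝ × ℝ, det2 e1 l' ≠ 0 → det2 e2 l' ≠ 0 → det2 f l' ≠ 0 →
      Wb l' e1 e2 f = Wb l e1 e2 f := by
  refine ⟨Wb_eq_eps2_formula h12 h1f h2f h1l h2l hfl, fun l' h1l' h2l' hfl' => ?_⟩
  rw [Wb_eq_orientation_formula h12 h1f h2f h1l' h2l' hfl',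
    Wb_eq_orientation_formula h12 h1f h2f h1l h2l hfl]
end

section
/- Let $\epsilon^{(1)}, \epsilon^{(2)}$ be two edge signatures (functions from edges of a graph to $\mathbb{Z}/2$) on a PBDTP graph $\mathcal{G}$ such that every edge lies on a directed path from boundary to boundary. Then $\epsilon^{(2)}$ is equivalent to $\epsilon^{(1)}$ (i.e., there exists $\eta: \text{internal vertices} \to \mathbb{Z}/2$ with $\epsilon^{(2)}_{U,V} = \epsilon^{(1)}_{U,V} + \eta(U) + \eta(V)$ on internal edges and $\epsilon^{(2)}_{U,V} = \epsilon^{(1)}_{U,V} + \eta(U)$ on boundary edges) if and only if for every edge-loop-erased directed path from a boundary source to a boundary sink and for every simple directed cycle, the sums of the two signatures along the path/cycle have the same parity. -/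
/-- A list of edges is a directed walk when the ending vertex of each edge is the starting
vertex of the next one. -/
def IsWalk {V E : Type*} (src dst : E → V) (l : List E) : Prop :=
  l.Chain' fun a b => dst a = src b

/-- A directed path from the boundary to the boundary: a nonempty directed walk whose first
edge starts at a boundary vertex and whose last edge ends at a boundary vertex. -/
def IsBoundaryPath {V E : Type*} (src dst : E → V) (B : Set V) (l : List E) : Prop :=
  l ≠ [] ∧ IsWalk src dst l ∧
    (∀ a ∈ l.head?, src a ∈ B) ∧ (∀ a ∈ l.getLast?, dst a ∈ B)

/-- A simple directed cycle: a nonempty closed directed walk visiting distinct vertices. -/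
def IsSimpleCycle {V E : Type*} (src dst : E → V) (l : List E) : Prop :=
  l ≠ [] ∧ IsWalk src dst l ∧
    (∀ a ∈ l.head?, ∀ b ∈ l.getLast?, dst b = src a) ∧ (l.map src).Nodup

/-- Two edge signatures are equivalent when they differ by the coboundary of a `ℤ/2`-valued
function `η` on vertices vanishing at the boundary: `ε₂(e) = ε₁(e) + η(src e) + η(dst e)`
(on an edge with a boundary endpoint this reduces to adding `η` at the internal endpoint). -/
def SigEquiv {V E : Type*} (src dst : E → V) (B : Set V) (ε₁ ε₂ : E → ZMod 2) : Prop :=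
  ∃ η : V → ZMod 2, (∀ v ∈ B, η v = 0) ∧
    ∀ e : E, ε₂ e = ε₁ e + η (src e) + η (dst e)

private lemma zmod2_add_self (a : ZMod 2) : a + a = 0 := by revert a; decide

private lemma zmod2_cancel {a b : ZMod 2} (h : a + b = 0) : a = b := by
  revert h; revert a b; decide

private lemma getLast?_append_cons {α : Type*} (a : List α) (y : α) (c : List α) :
    (a ++ y :: c).getLast? = (y :: c).getLast? := by
  simp [List.getLast?_append, List.getLast?_cons]

/-- Splitting a list at a duplicate value of `f`. -/
private lemma dup_split {α β : Type*} (f : α → β) :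
    ∀ l : List α, ¬ (l.map f).Nodup →
      ∃ (a : List α) (x : α) (b : List α) (y : α) (c : List α),
        l = a ++ x :: b ++ y :: c ∧ f x = f y := by
  intro l
  induction l with
  | nil => intro h; exact absurd List.nodup_nil h
  | cons u t ih =>
    intro h
    rw [List.map_cons, List.nodup_cons] at h
    by_cases hm : f u ∈ t.map f
    · obtain ⟨y, hy, hfy⟩ := List.mem_map.mp hm
      obtain ⟨b, c, rfl⟩ := List.append_of_mem hy
      exact ⟨[], u, b, y, c, rfl, hfy.symm⟩
    · have ht : ¬ (t.map f).Nodup := fun hn => h ⟨hm, hn⟩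
      obtain ⟨a, x, b, y, c, rfl, hxy⟩ := ih ht
      exact ⟨u :: a, x, b, y, c, rfl, hxy⟩

/-- Telescoping sum of a coboundary along a directed walk. -/
private lemma walk_sum {V E : Type*} (src dst : E → V) (η : V → ZMod 2) :
    ∀ (l : List E) (x : E), IsWalk src dst (x :: l) →
      ((x :: l).map fun e => η (src e) + η (dst e)).sum
        = η (src x) + η (dst (l.getLastD x)) := by
  intro l
  induction l with
  | nil => intro x _; simp
  | cons y t ih =>
    intro x hw
    rw [IsWalk, List.Chain', List.isChain_cons_cons] at hw
    have h1 := ih y hw.2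
    simp only [List.map_cons, List.sum_cons] at h1 ⊢
    rw [h1, List.getLastD_cons]
    have h2 : dst x = src y := hw.1
    calc η (src x) + η (dst x) + (η (src y) + η (dst (t.getLastD y)))
        = η (src x) + (η (dst x) + η (src y)) + η (dst (t.getLastD y)) := by ring
      _ = η (src x) + η (dst (t.getLastD y)) := by
          rw [h2, zmod2_add_self]; ring

/-- Any closed directed walk has zero `δ`-sum, given that simple cycles do. -/
private lemma closed_sum_zero {V E : Type*} (src dst : E → V) (δ : E → ZMod 2)
    (h2 : ∀ l : List E, IsSimpleCycle src dst l → (l.map δ).sum = 0) :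
    ∀ (n : ℕ) (l : List E), l.length ≤ n → l ≠ [] → IsWalk src dst l →
      (∀ a ∈ l.head?, ∀ b ∈ l.getLast?, dst b = src a) → (l.map δ).sum = 0 := by
  intro n
  induction n with
  | zero =>
    intro l hl hne _ _
    exact absurd (List.length_eq_zero_iff.mp (Nat.le_zero.mp hl)) hne
  | succ n ih =>
    intro l hl hne hw hcl
    by_cases hnd : (l.map src).Nodup
    · exact h2 l ⟨hne, hw, hcl, hnd⟩
    · obtain ⟨a, x, b, y, c, rfl, hxy⟩ := dup_split src l hnd
      have hw' : List.Chain' (fun a b => dst a = src b) (a ++ ((x :: b) ++ (y :: c))) := by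
        simpa [IsWalk] using hw
      rw [List.Chain', List.isChain_append, List.isChain_append] at hw'
      obtain ⟨hwa, ⟨hwxb, hwyc, hj2⟩, hj1⟩ := hw'
      have hj1' : ∀ u ∈ a.getLast?, dst u = src x := by
        intro u hu; exact hj1 u hu x (by simp)
      have hj2' : ∀ u ∈ (x :: b).getLast?, dst u = src y := by
        intro u hu; exact hj2 u hu y (by simp)
      -- the middle closed walk
      have hm : (((x :: b)).map δ).sum = 0 := by
        apply ih (x :: b)
        · simp only [List.length_append, List.length_cons] at hl ⊢; omega
        · simp
        · exact hwxb
        · intro p hp q hq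
          simp only [List.head?_cons, Option.mem_some_iff] at hp
          subst hp
          rw [hj2' q hq, hxy]
      -- the remaining closed walk
      have hr : ((a ++ y :: c).map δ).sum = 0 := by
        apply ih (a ++ y :: c)
        · simp only [List.length_append, List.length_cons] at hl ⊢; omega
        · simp
        · rw [IsWalk, List.Chain', List.isChain_append]
          refine ⟨hwa, hwyc, ?_⟩
          intro u hu v hv
          simp only [List.head?_cons, Option.mem_some_iff] at hv
          subst hv
          rw [hj1' u hu, hxy]
        · intro p hp q hq
          have hq' : q ∈ (a ++ x :: b ++ y :: c).getLast? := by
            rw [getLast?_append_cons] at hq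
            rw [show a ++ x :: b ++ y :: c = (a ++ x :: b) ++ y :: c by simp,
              getLast?_append_cons]
            exact hq
          rcases a with _ | ⟨a0, a'⟩
          · simp only [List.nil_append, List.head?_cons, Option.mem_some_iff] at hp
            subst hp
            have := hcl x (by simp) q hq'
            rw [this, hxy]
          · have hp' : p ∈ ((a0 :: a') ++ x :: b ++ y :: c).head? := by
              simpa [List.head?_append] using hp
            exact hcl p hp' q hq'
      simp only [List.map_append, List.sum_append, List.map_cons, List.sum_cons] at hm hr ⊢
      linear_combination hm + hr

/-- Any directed boundary-to-boundary walk has zero `δ`-sum, given that edge-simple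
boundary paths and simple cycles do. -/
private lemma bpath_sum_zero {V E : Type*} (src dst : E → V) (B : Set V) (δ : E → ZMod 2)
    (h1 : ∀ l : List E, l.Nodup → IsBoundaryPath src dst B l → (l.map δ).sum = 0)
    (h2 : ∀ l : List E, IsSimpleCycle src dst l → (l.map δ).sum = 0) :
    ∀ (n : ℕ) (l : List E), l.length ≤ n → IsBoundaryPath src dst B l →
      (l.map δ).sum = 0 := by
  intro n
  induction n with
  | zero =>
    intro l hl hp
    exact absurd (List.length_eq_zero_iff.mp (Nat.le_zero.mp hl)) hp.1
  | succ n ih =>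
    intro l hl hp
    obtain ⟨hne, hw, hhead, hlast⟩ := hp
    by_cases hnd : l.Nodup
    · exact h1 l hnd ⟨hne, hw, hhead, hlast⟩
    · have hnd' : ¬ (l.map id).Nodup := by rwa [List.map_id]
      obtain ⟨a, x, b, y, c, rfl, hxy⟩ := dup_split id l hnd'
      simp only [id] at hxy
      subst hxy
      have hw' : List.Chain' (fun a b => dst a = src b) (a ++ ((x :: b) ++ (x :: c))) := by
        simpa [IsWalk] using hw
      rw [List.Chain', List.isChain_append, List.isChain_append] at hw'
      obtain ⟨hwa, ⟨hwxb, hwyc, hj2⟩, hj1⟩ := hw'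
      have hj1' : ∀ u ∈ a.getLast?, dst u = src x := by
        intro u hu; exact hj1 u hu x (by simp)
      have hj2' : ∀ u ∈ (x :: b).getLast?, dst u = src x := by
        intro u hu; exact hj2 u hu x (by simp)
      -- the middle closed walk
      have hm : (((x :: b)).map δ).sum = 0 := by
        apply closed_sum_zero src dst δ h2 (x :: b).length _ le_rfl (by simp) hwxb
        intro p hp q hq
        simp only [List.head?_cons, Option.mem_some_iff] at hp
        subst hp
        exact hj2' q hq
      -- the remaining boundary path
      have hr : ((a ++ x :: c).map δ).sum = 0 := by
        apply ih (a ++ x :: c)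
        · simp only [List.length_append, List.length_cons] at hl ⊢; omega
        refine ⟨by simp, ?_, ?_, ?_⟩
        · rw [IsWalk, List.Chain', List.isChain_append]
          refine ⟨hwa, hwyc, ?_⟩
          intro u hu v hv
          simp only [List.head?_cons, Option.mem_some_iff] at hv
          subst hv
          exact hj1' u hu
        · intro p hp
          rcases a with _ | ⟨a0, a'⟩
          · simp only [List.nil_append, List.head?_cons, Option.mem_some_iff] at hp
            subst hp
            exact hhead x (by simp)
          · apply hhead
            simpa [List.head?_append] using hp
        · intro q hq
          apply hlast
          rw [getLast?_append_cons] at hq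
          rw [show a ++ x :: b ++ x :: c = (a ++ x :: b) ++ x :: c by simp,
            getLast?_append_cons]
          exact hq
      simp only [List.map_append, List.sum_append, List.map_cons, List.sum_cons] at hm hr ⊢
      linear_combination hm + hr

/-- Construction of the vertex potential `η` from the parity data. -/
private lemma sig_equiv_of_sums {V E : Type*} (src dst : E → V) (B : Set V) (δ : E → ZMod 2)
    (hEdgePath : ∀ e : E, ∃ l : List E, e ∈ l ∧ l.Nodup ∧ IsBoundaryPath src dst B l)
    (h1 : ∀ l : List E, l.Nodup → IsBoundaryPath src dst B l → (l.map δ).sum = 0)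
    (h2 : ∀ l : List E, IsSimpleCycle src dst l → (l.map δ).sum = 0) :
    ∃ η : V → ZMod 2, (∀ v ∈ B, η v = 0) ∧ ∀ e : E, δ e = η (src e) + η (dst e) := by
  classical
  have hall : ∀ l : List E, IsBoundaryPath src dst B l → (l.map δ).sum = 0 :=
    fun l h => bpath_sum_zero src dst B δ h1 h2 l.length l le_rfl h
  -- `Reach v c` : `c` is the `δ`-sum of some prefix of a boundary path, ending at `v`.
  set Reach : V → ZMod 2 → Prop := fun v c =>
    ∃ p s : List E, p ≠ [] ∧ IsBoundaryPath src dst B (p ++ s) ∧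
      (∀ a ∈ p.getLast?, dst a = v) ∧ (p.map δ).sum = c with hReach
  -- key: the sum along a prefix equals the sum along a complementary suffix
  have cross : ∀ (v : V), v ∉ B → ∀ p₁ s₁ p₂ s₂ : List E, p₁ ≠ [] → p₂ ≠ [] →
      IsBoundaryPath src dst B (p₁ ++ s₁) → IsBoundaryPath src dst B (p₂ ++ s₂) →
      (∀ a ∈ p₁.getLast?, dst a = v) → (∀ a ∈ p₂.getLast?, dst a = v) →
      (p₁.map δ).sum = (s₂.map δ).sum := by
    intro v hv p₁ s₁ p₂ s₂ hp₁ hp₂ hb₁ hb₂ hl₁ hl₂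
    obtain ⟨hne₁, hw₁, hh₁, hg₁⟩ := hb₁
    obtain ⟨hne₂, hw₂, hh₂, hg₂⟩ := hb₂
    -- s₂ is nonempty since v ∉ B
    have hs₂ : s₂ ≠ [] := by
      rintro rfl
      obtain ⟨q, hq⟩ := Option.isSome_iff_exists.mp
        ((List.getLast?_isSome).mpr hp₂)
      have hqB : dst q ∈ B := hg₂ q (by simpa [List.getLast?_append] using hq)
      rw [hl₂ q hq] at hqB
      exact hv hqB
    rw [IsWalk, List.Chain', List.isChain_append] at hw₁ hw₂
    have hbp : IsBoundaryPath src dst B (p₁ ++ s₂) := by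
      refine ⟨by simp [hp₁], ?_, ?_, ?_⟩
      · rw [IsWalk, List.Chain', List.isChain_append]
        refine ⟨hw₁.1, hw₂.2.1, ?_⟩
        intro u hu w hw
        obtain ⟨q, hq⟩ := Option.isSome_iff_exists.mp
          ((List.getLast?_isSome).mpr hp₂)
        have := hw₂.2.2 q hq w hw
        rw [hl₂ q hq] at this
        rw [hl₁ u hu, this]
      · intro a ha
        apply hh₁
        rcases p₁ with _ | ⟨p0, p'⟩
        · exact absurd rfl hp₁
        · simpa [List.head?_append] using ha
      · intro a ha
        apply hg₂
        rcases s₂ with _ | ⟨s0, s'⟩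
        · exact absurd rfl hs₂
        · rw [getLast?_append_cons] at ha
          rw [getLast?_append_cons]
          exact ha
    have h0 := hall _ hbp
    rw [List.map_append, List.sum_append] at h0
    exact zmod2_cancel h0
  have uniq : ∀ v ∉ B, ∀ c c', Reach v c → Reach v c' → c = c' := by
    intro v hv c c' ⟨p₁, s₁, hp₁, hb₁, hl₁, hc₁⟩ ⟨p₂, s₂, hp₂, hb₂, hl₂, hc₂⟩
    have e1 := cross v hv p₁ s₁ p₂ s₂ hp₁ hp₂ hb₁ hb₂ hl₁ hl₂
    have e2 := cross v hv p₂ s₂ p₂ s₂ hp₂ hp₂ hb₂ hb₂ hl₂ hl₂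
    rw [hc₁] at e1; rw [hc₂] at e2
    rw [e1, ← e2]
  set η : V → ZMod 2 := fun v =>
    if v ∈ B then 0 else if h : ∃ c, Reach v c then h.choose else 0 with hη
  have hηB : ∀ v ∈ B, η v = 0 := by intro v hv; simp [hη, hv]
  have keyP : ∀ (p s : List E) (v : V), p ≠ [] → IsBoundaryPath src dst B (p ++ s) →
      (∀ a ∈ p.getLast?, dst a = v) → η v = (p.map δ).sum := by
    intro p s v hpne hbp hpl
    by_cases hv : v ∈ B
    · rw [hηB v hv]
      obtain ⟨hne, hw, hh, hg⟩ := hbp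
      rw [IsWalk, List.Chain', List.isChain_append] at hw
      have : IsBoundaryPath src dst B p := by
        refine ⟨hpne, hw.1, ?_, ?_⟩
        · intro a ha
          apply hh
          rcases p with _ | ⟨p0, p'⟩
          · exact absurd rfl hpne
          · simpa [List.head?_append] using ha
        · intro a ha
          rw [hpl a ha]; exact hv
      exact (hall p this).symm
    · have hR : Reach v ((p.map δ).sum) := ⟨p, s, hpne, hbp, hpl, rfl⟩
      have hex : ∃ c, Reach v c := ⟨_, hR⟩
      have : η v = hex.choose := by simp [hη, hv, hex]
      rw [this]
      exact uniq v hv _ _ hex.choose_spec hR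
  refine ⟨η, hηB, ?_⟩
  intro e
  obtain ⟨l, hel, _, hp⟩ := hEdgePath e
  obtain ⟨p, s, rfl⟩ := List.append_of_mem hel
  have hdst : η (dst e) = ((p ++ [e]).map δ).sum := by
    apply keyP (p ++ [e]) s (dst e) (by simp)
    · rwa [List.append_assoc, List.singleton_append]
    · intro a ha
      simp only [List.getLast?_append, List.getLast?_singleton, Option.or_some, Option.some_or,
        Option.mem_some_iff] at ha
      rw [ha]
  have hsrc : η (src e) = (p.map δ).sum := by
    rcases p with _ | ⟨p0, p'⟩
    · have : src e ∈ B := hp.2.2.1 e (by simp)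
      rw [hηB _ this]; simp
    · apply keyP (p0 :: p') (e :: s) (src e) (by simp) hp
      intro a ha
      have hw := hp.2.1
      rw [IsWalk, List.Chain', List.isChain_append] at hw
      exact hw.2.2 a ha e (by simp)
  rw [hsrc, hdst, List.map_append, List.sum_append]
  simp only [List.map_cons, List.map_nil, List.sum_cons, List.sum_nil]
  linear_combination - zmod2_add_self ((p.map δ).sum)

/-- (Lemma `lemma:equiv_on_path`.)  On a PBDTP graph representing an
irreducible positroid cell, in which every edge lies on a (loop-erased) directed path from
boundary to boundary, two edge signatures are equivalent if and only if their sums along every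
edge-loop-erased directed path from a boundary source to a boundary sink and along every simple
directed cycle have the same parity. -/
theorem signature_equiv_iff_parity {V E : Type*} (src dst : E → V) (B : Set V)
    (ε₁ ε₂ : E → ZMod 2)
    (hEdgePath : ∀ e : E, ∃ l : List E, e ∈ l ∧ l.Nodup ∧ IsBoundaryPath src dst B l) :
    SigEquiv src dst B ε₁ ε₂ ↔
      ((∀ l : List E, l.Nodup → IsBoundaryPath src dst B l →
          (l.map ε₁).sum = (l.map ε₂).sum) ∧
        (∀ l : List E, IsSimpleCycle src dst l →
          (l.map ε₁).sum = (l.map ε₂).sum)) := by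
  constructor
  · rintro ⟨η, hB, hε⟩
    have hsum : ∀ l : List E,
        (l.map ε₂).sum = (l.map ε₁).sum + (l.map fun e => η (src e) + η (dst e)).sum := by
      intro l
      rw [← List.sum_map_add]
      congr 1
      apply List.map_congr_left
      intro e _
      rw [hε e]; ring
    constructor
    · intro l _ hp
      obtain ⟨hne, hw, hh, hg⟩ := hp
      rcases l with _ | ⟨x, t⟩
      · exact absurd rfl hne
      rw [hsum, walk_sum src dst η t x hw]
      have h1 : η (src x) = 0 := hB _ (hh x (by simp))
      have h2 : η (dst (t.getLastD x)) = 0 := by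
        apply hB
        apply hg
        simp [List.getLast?_cons, List.getLastD_eq_getLast?]
      rw [h1, h2]; ring
    · intro l hc
      obtain ⟨hne, hw, hcl, _⟩ := hc
      rcases l with _ | ⟨x, t⟩
      · exact absurd rfl hne
      rw [hsum, walk_sum src dst η t x hw]
      have h2 : dst (t.getLastD x) = src x := by
        apply hcl x (by simp)
        simp [List.getLast?_cons, List.getLastD_eq_getLast?]
      rw [h2, zmod2_add_self]; ring
  · rintro ⟨h1, h2⟩
    have h1' : ∀ l : List E, l.Nodup → IsBoundaryPath src dst B l →
        (l.map fun e => ε₁ e + ε₂ e).sum = 0 := by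
      intro l hn hp
      rw [List.sum_map_add, h1 l hn hp]
      exact zmod2_add_self _
    have h2' : ∀ l : List E, IsSimpleCycle src dst l →
        (l.map fun e => ε₁ e + ε₂ e).sum = 0 := by
      intro l hc
      rw [List.sum_map_add, h2 l hc]
      exact zmod2_add_self _
    obtain ⟨η, hB, hco⟩ :=
      sig_equiv_of_sums src dst B (fun e => ε₁ e + ε₂ e) hEdgePath h1' h2'
    refine ⟨η, hB, ?_⟩
    intro e
    linear_combination (hco e) - zmod2_add_self (ε₁ e)
end

section
/- In the parallel edge reduction of a PBDTP network (removal of a trivalent white vertex and a trivalent black vertex joined by two parallel edges of weights $w_2, w_3$, with incoming edge $e_1$ of weight $w_1$ into the white vertex and outgoing edge $e_4$ of weight $w_4$ out of the black vertex), the edge vectors satisfy $E_1 = (-1)^{\mathrm{int}(e_1)+\mathrm{int}(e_2)} w_1(w_2+w_3) E_4$, $E_2 = (-1)^{\mathrm{int}(e_2)} w_2 E_4$, $E_3 = (-1)^{\mathrm{int}(e_2)} w_3 E_4$, and the reduced edge has weight $\tilde{w}_1 = w_1(w_2+w_3)w_4$ with unchanged edge vector $\tilde{E}_1 = E_1$.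 -/
theorem parallel_edge_reduction_general {Vc : Type*} [AddCommGroup Vc] [Module ℝ Vc]
    (E1 E2 E3 E4 F tE1 : Vc) (w1 w2 w3 w4 tw1 : ℝ) (i1 i2 i4 : ℕ)
    (hwhite : E1 = ((-1 : ℝ) ^ i1 * w1) • (E2 + E3))
    (hblack2 : E2 = ((-1 : ℝ) ^ i2 * w2) • E4)
    (hblack3 : E3 = ((-1 : ℝ) ^ i2 * w3) • E4)
    (hnext : E4 = ((-1 : ℝ) ^ i4 * w4) • F)
    (htw : tw1 = w1 * (w2 + w3) * w4)
    (htE : tE1 = ((-1 : ℝ) ^ (i1 + i2 + i4) * tw1) • F) :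
    E1 = ((-1 : ℝ) ^ (i1 + i2) * (w1 * (w2 + w3))) • E4 ∧
    E2 = ((-1 : ℝ) ^ i2 * w2) • E4 ∧
    E3 = ((-1 : ℝ) ^ i2 * w3) • E4 ∧
    tE1 = E1 := by
  have hE1 : E1 = ((-1 : ℝ) ^ (i1 + i2) * (w1 * (w2 + w3))) • E4 := by
    rw [hwhite, hblack2, hblack3, ← add_smul, smul_smul]
    congr 1
    ring
  refine ⟨hE1, hblack2, hblack3, ?_⟩
  rw [htE, htw, hE1, hnext, smul_smul]
  congr 1
  ring

/-- (The parallel edge reduction (R1).)  Edge `e₁` of weight `w₁` enters the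
white vertex `U`; two parallel edges `e₂, e₃` of weights `w₂, w₃` go from `U` to the black
vertex `V`; edge `e₄` of weight `w₄` leaves `V`, and `F` is the vector following `e₄`
(`E₄ = (-1)^{int(e₄)} w₄ F`).  With all the local winding numbers equal to zero and
`int(e₂) = int(e₃)`, the geometric relations give
`E₁ = (-1)^{int(e₁)+int(e₂)} w₁ (w₂+w₃) E₄`, `E₂ = (-1)^{int(e₂)} w₂ E₄`,
`E₃ = (-1)^{int(e₂)} w₃ E₄`; the reduced edge has weight `w̃₁ = w₁(w₂+w₃)w₄`, intersection
number `int(ẽ₁) = int(e₁)+int(e₂)+int(e₄)`, and unchanged edge vector `Ẽ₁ = E₁`. -/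
theorem parallel_edge_reduction {Vc : Type*} [AddCommGroup Vc] [Module ℝ Vc]
    (E1 E2 E3 E4 F tE1 : Vc) (w1 w2 w3 w4 tw1 : ℝ) (i1 i2 i4 : ℕ)
    (hw1 : 0 < w1) (hw2 : 0 < w2) (hw3 : 0 < w3) (hw4 : 0 < w4)
    (hwhite : E1 = ((-1 : ℝ) ^ i1 * w1) • (E2 + E3))
    (hblack2 : E2 = ((-1 : ℝ) ^ i2 * w2) • E4)
    (hblack3 : E3 = ((-1 : ℝ) ^ i2 * w3) • E4)
    (hnext : E4 = ((-1 : ℝ) ^ i4 * w4) • F)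
    (htw : tw1 = w1 * (w2 + w3) * w4)
    (htE : tE1 = ((-1 : ℝ) ^ (i1 + i2 + i4) * tw1) • F) :
    E1 = ((-1 : ℝ) ^ (i1 + i2) * (w1 * (w2 + w3))) • E4 ∧
    E2 = ((-1 : ℝ) ^ i2 * w2) • E4 ∧
    E3 = ((-1 : ℝ) ^ i2 * w3) • E4 ∧
    tE1 = E1 :=
  parallel_edge_reduction_general E1 E2 E3 E4 F tE1 w1 w2 w3 w4 tw1 i1 i2 i4 hwhite hblack2 hblack3
    hnext htw htE
end
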